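/- Let λ ∈ ℂ with Re λ < 0 and μ ∈ ℂ with Re μ > 0 and |λ + conj μ| ≤ ε. Then min over x ∈ ℂ of ‖z·v[−conj λ] + x·v[μ]‖_{H₂}² equals |z|² · |μ + conj λ|² / (2|μ − λ|² · Re(−λ)), and consequently this minimum is at most |z|² ε² / (2 |Re λ|³). -/

import Mathlib

/-!
Expanding `|z (iω + p)⁻¹ + x (iω + q)⁻¹|²` reduces the `H₂` norm to the Gram integrals
`∫ (iω + a)⁻¹ (-iω + b)⁻¹ dω = 2π / (a + b)` for `Re a, Re b > 0`. By partial fractions this is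
`(a + b)⁻¹ ∫ ((iω + a)⁻¹ + (-iω + b)⁻¹) dω`, and `-i (log (iω + a) - log (-iω + b))` is an
antiderivative whose limits at `±∞` are `±π`, because `log (±iω + a) - log ω → log (±i) = ±iπ/2`.
The squared norm is thus a real quadratic function of `x`; completing the square gives the
minimum, which simplifies by `|μ + conj λ|² = |μ - λ|² + 4 Re μ Re λ`. The final bound uses
`|μ - λ| ≥ Re (μ - λ) ≥ |Re λ|`.
-/

open MeasureTheory Complex Filter Topology
open scoped Real ComplexConjugate

lemma add_ne_zero_of_re_pos {a b : ℂ} (ha : 0 < a.re) (hb : 0 < b.re) : a + b ≠ 0 :=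
  fun h => (add_pos ha hb).ne' (by simpa using congrArg re h)

lemma mul_ofReal_add_mem_slitPlane {c a : ℂ} (hc : c.re = 0) (ha : 0 < a.re) (ω : ℝ) :
    c * ω + a ∈ slitPlane :=
  mem_slitPlane_iff.2 (Or.inl (by simpa [hc] using ha))

lemma hasDerivAt_log_mul_ofReal_add {c a : ℂ} (hc : c.re = 0) (ha : 0 < a.re) (ω : ℝ) :
    HasDerivAt (fun ω : ℝ => log (c * ω + a)) (c / (c * ω + a)) ω :=
  (((hasDerivAt_id ω).ofReal_comp.const_mul c).add_const a).clog_real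
    (mul_ofReal_add_mem_slitPlane hc ha ω) |>.congr_deriv (by simp)

lemma tendsto_log_mul_add_sub_log {c : ℂ} (hc : c ∈ slitPlane) (a : ℂ) :
    Tendsto (fun t : ℝ => log (c * t + a) - log t) atTop (𝓝 (log c)) := by
  have hlim : Tendsto (fun t : ℝ => c + a * (t⁻¹ : ℝ)) atTop (𝓝 c) := by
    simpa using tendsto_const_nhds.add (tendsto_const_nhds.mul
      ((continuous_ofReal.tendsto 0).comp tendsto_inv_atTop_zero))
  refine ((continuousAt_clog hc).tendsto.comp hlim).congr' ?_
  filter_upwards [eventually_gt_atTop 0, hlim.eventually (isOpen_slitPlane.mem_nhds hc)]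
    with t ht hslit
  have hfactor : c * t + a = t * (c + a * (t⁻¹ : ℝ)) := by
    have : (t : ℂ) ≠ 0 := ofReal_ne_zero.2 ht.ne'
    push_cast
    field_simp
  rw [Function.comp_apply, hfactor, log_ofReal_mul ht (slitPlane_ne_zero hslit),
    ofReal_log ht.le]
  ring

lemma integrable_norm_inv_I_mul_add_sq {a : ℂ} (ha : a.re ≠ 0) :
    Integrable fun ω : ℝ => ‖(I * ω + a)⁻¹‖ ^ 2 := by
  refine (((integrable_inv_one_add_sq.comp_div ha).comp_add_right a.im).const_mul
    (a.re ^ 2)⁻¹).congr (Eventually.of_forall fun ω => ?_)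
  simp [Complex.sq_norm, normSq_apply]
  field_simp

lemma integrable_inv_I_mul_add_mul_inv {a b : ℂ} (ha : a.re ≠ 0) (hb : b.re ≠ 0) :
    Integrable fun ω : ℝ => (I * ω + a)⁻¹ * (-I * ω + b)⁻¹ := by
  have hb' : Integrable fun ω : ℝ => ‖(-I * ω + b)⁻¹‖ ^ 2 := by
    simpa using (integrable_norm_inv_I_mul_add_sq hb).comp_neg
  refine ((integrable_norm_inv_I_mul_add_sq ha).add hb').mono' (by fun_prop)
    (Eventually.of_forall fun ω => ?_)
  rw [norm_mul, Pi.add_apply]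
  nlinarith [sq_nonneg (‖(I * ω + a)⁻¹‖ - ‖(-I * ω + b)⁻¹‖),
    mul_nonneg (norm_nonneg (I * ω + a)⁻¹) (norm_nonneg (-I * ω + b)⁻¹)]

lemma inv_I_mul_add_mul_inv_eq {a b : ℂ} (ha : 0 < a.re) (hb : 0 < b.re) (ω : ℝ) :
    (I * ω + a)⁻¹ * (-I * ω + b)⁻¹ = (a + b)⁻¹ * ((I * ω + a)⁻¹ + (-I * ω + b)⁻¹) := by
  have hA := slitPlane_ne_zero (mul_ofReal_add_mem_slitPlane (c := I) (by simp) ha ω)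
  have hB := slitPlane_ne_zero (mul_ofReal_add_mem_slitPlane (c := -I) (by simp) hb ω)
  have hab : a + b ≠ 0 := add_ne_zero_of_re_pos ha hb
  have hsum : I * ω + a + (-I * ω + b) = a + b := by ring
  rw [inv_add_inv hA hB, hsum, div_eq_mul_inv, inv_mul_cancel_left₀ hab, mul_inv]

lemma integral_inv_I_mul_add_add_inv {a b : ℂ} (ha : 0 < a.re) (hb : 0 < b.re) :
    ∫ ω : ℝ, ((I * ω + a)⁻¹ + (-I * ω + b)⁻¹) = 2 * π := by
  have hab : a + b ≠ 0 := add_ne_zero_of_re_pos ha hb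
  have hint : Integrable fun ω : ℝ => (I * ω + a)⁻¹ + (-I * ω + b)⁻¹ := by
    refine ((integrable_inv_I_mul_add_mul_inv ha.ne' hb.ne').const_mul (a + b)).congr
      (Eventually.of_forall fun ω => ?_)
    simp only [inv_I_mul_add_mul_inv_eq ha hb, mul_inv_cancel_left₀ hab]
  have hderiv : ∀ ω : ℝ, HasDerivAt (fun ω : ℝ => -I * (log (I * ω + a) - log (-I * ω + b)))
      ((I * ω + a)⁻¹ + (-I * ω + b)⁻¹) ω := by
    intro ω
    refine (((hasDerivAt_log_mul_ofReal_add (c := I) (by simp) ha ω).sub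
      (hasDerivAt_log_mul_ofReal_add (c := -I) (by simp) hb ω)).const_mul (-I)).congr_deriv ?_
    simp only [div_eq_mul_inv]
    ring_nf
    rw [I_sq]
    ring
  have hI : I ∈ slitPlane := by simp [mem_slitPlane_iff]
  have hnegI : -I ∈ slitPlane := by simp [mem_slitPlane_iff]
  have hlogI : log I - log (-I) = π * I := by rw [log_I, log_neg_I]; ring
  have htop : Tendsto (fun ω : ℝ => -I * (log (I * ω + a) - log (-I * ω + b))) atTop (𝓝 π) := by
    convert ((tendsto_log_mul_add_sub_log hI a).sub
      (tendsto_log_mul_add_sub_log hnegI b)).const_mul (-I) using 2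
    · ring
    · rw [hlogI]; ring_nf; simp [I_sq]
  have hbot : Tendsto (fun ω : ℝ => -I * (log (I * ω + a) - log (-I * ω + b))) atBot
      (𝓝 (-π)) := by
    convert (((tendsto_log_mul_add_sub_log hnegI a).sub
      (tendsto_log_mul_add_sub_log hI b)).const_mul (-I)).comp tendsto_neg_atBot_atTop using 2
    · simp only [Function.comp_apply, ofReal_neg, mul_neg, neg_mul, neg_neg]; ring
    · rw [← neg_sub, hlogI]; ring_nf; simp [I_sq]
  rw [integral_of_hasDerivAt_of_tendsto hderiv hint hbot htop]
  ring

lemma integral_inv_I_mul_add_mul_inv {a b : ℂ} (ha : 0 < a.re) (hb : 0 < b.re) :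
    ∫ ω : ℝ, (I * ω + a)⁻¹ * (-I * ω + b)⁻¹ = 2 * π / (a + b) := by
  simp_rw [inv_I_mul_add_mul_inv_eq ha hb, integral_const_mul,
    integral_inv_I_mul_add_add_inv ha hb]
  ring

lemma ofReal_norm_sq_mul_inv_add (z x p q : ℂ) (ω : ℝ) :
    ((‖z * (I * ω + p)⁻¹ + x * (I * ω + q)⁻¹‖ ^ 2 : ℝ) : ℂ)
      = z * conj z * ((I * ω + p)⁻¹ * (-I * ω + conj p)⁻¹)
        + z * conj x * ((I * ω + p)⁻¹ * (-I * ω + conj q)⁻¹)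
        + x * conj z * ((I * ω + q)⁻¹ * (-I * ω + conj p)⁻¹)
        + x * conj x * ((I * ω + q)⁻¹ * (-I * ω + conj q)⁻¹) := by
  have hconj : ∀ a : ℂ, conj (I * ω + a)⁻¹ = (-I * ω + conj a)⁻¹ := by simp
  rw [ofReal_pow, ← mul_conj', map_add, map_mul, map_mul, hconj, hconj]
  ring

lemma integral_norm_sq_add {p q : ℂ} (hp : 0 < p.re) (hq : 0 < q.re) (z x : ℂ) :
    ∫ ω : ℝ, ‖z * (I * ω + p)⁻¹ + x * (I * ω + q)⁻¹‖ ^ 2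
      = 2 * π * (‖z‖ ^ 2 / (2 * p.re) + 2 * (conj x * (z / (p + conj q))).re
        + (2 * q.re)⁻¹ * ‖x‖ ^ 2) := by
  have hp' : 0 < (conj p).re := by simpa using hp
  have hq' : 0 < (conj q).re := by simpa using hq
  have hK : ∀ {a b : ℂ}, 0 < a.re → 0 < b.re → ∀ c : ℂ,
      Integrable fun ω : ℝ => c * ((I * ω + a)⁻¹ * (-I * ω + b)⁻¹) :=
    fun ha hb c => (integrable_inv_I_mul_add_mul_inv ha.ne' hb.ne').const_mul c
  apply ofReal_injective
  rw [← integral_complex_ofReal]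
  simp_rw [ofReal_norm_sq_mul_inv_add]
  rw [integral_add (by exact ((hK hp hp' _).add (hK hp hq' _)).add (hK hq hp' _)) (hK hq hq' _),
    integral_add (by exact (hK hp hp' _).add (hK hp hq' _)) (hK hq hp' _),
    integral_add (hK hp hp' _) (hK hp hq' _)]
  simp only [integral_const_mul, integral_inv_I_mul_add_mul_inv hp hp',
    integral_inv_I_mul_add_mul_inv hp hq', integral_inv_I_mul_add_mul_inv hq hp',
    integral_inv_I_mul_add_mul_inv hq hq']
  have hpq : p + conj q ≠ 0 := add_ne_zero_of_re_pos hp hq'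
  have hqp : q + conj p ≠ 0 := add_ne_zero_of_re_pos hq hp'
  rw [add_conj, add_conj]
  push_cast
  rw [re_eq_add_conj (conj x * (z / (p + conj q))), ← mul_conj', ← mul_conj']
  simp only [map_mul, map_div₀, conj_conj, map_add]
  have hqp' : conj p + q ≠ 0 := add_ne_zero_of_re_pos hp' hq
  have := ofReal_ne_zero.2 hp.ne'
  have := ofReal_ne_zero.2 hq.ne'
  field_simp
  ring

lemma isLeast_range_add_re_add_mul_norm_sq (a c : ℝ) (b : ℂ) (hc : 0 < c) :
    IsLeast (Set.range fun x : ℂ => a + 2 * (conj x * b).re + c * ‖x‖ ^ 2)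
      (a - ‖b‖ ^ 2 / c) := by
  have hsquare : ∀ x : ℂ,
      a + 2 * (conj x * b).re + c * ‖x‖ ^ 2 = a - ‖b‖ ^ 2 / c + ‖c * x + b‖ ^ 2 / c := by
    intro x
    simp only [Complex.sq_norm, normSq_apply, mul_re, mul_im, conj_re, conj_im, add_re, add_im,
      ofReal_re, ofReal_im]
    field_simp
    ring
  refine ⟨⟨-b / c, ?_⟩, ?_⟩
  · have : (c : ℂ) * (-b / c) + b = 0 := by
      field_simp [ofReal_ne_zero.2 hc.ne']
      ring
    simp only [hsquare, this, norm_zero]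
    ring
  · rintro _ ⟨x, rfl⟩
    simp only [hsquare]
    have := div_nonneg (sq_nonneg ‖c * x + b‖) hc.le
    linarith

lemma norm_add_conj_sq (μ l : ℂ) : ‖μ + conj l‖ ^ 2 = ‖μ - l‖ ^ 2 + 4 * μ.re * l.re := by
  simp only [Complex.sq_norm, normSq_apply, add_re, add_im, sub_re, sub_im, conj_re, conj_im]
  ring

lemma norm_sq_mul_norm_add_conj_sq_div_le {l μ : ℂ} {ε : ℝ} (hl : l.re < 0) (hμ : 0 ≤ μ.re)
    (hε : ‖l + conj μ‖ ≤ ε) (z : ℂ) :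
    ‖z‖ ^ 2 * ‖μ + conj l‖ ^ 2 / (2 * ‖μ - l‖ ^ 2 * (-l).re)
      ≤ ‖z‖ ^ 2 * ε ^ 2 / (2 * |l.re| ^ 3) := by
  have hnum : ‖μ + conj l‖ ≤ ε := by rwa [← norm_conj, map_add, conj_conj, add_comm]
  have hre : (-l).re = |l.re| := by simp [abs_of_neg hl]
  have hpos : 0 < |l.re| := abs_pos.2 hl.ne
  have hden : |l.re| ≤ ‖μ - l‖ := by
    have := re_le_norm (μ - l)
    rw [sub_re] at this
    rw [abs_of_neg hl]
    linarith
  rw [hre]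
  calc ‖z‖ ^ 2 * ‖μ + conj l‖ ^ 2 / (2 * ‖μ - l‖ ^ 2 * |l.re|)
      ≤ ‖z‖ ^ 2 * ε ^ 2 / (2 * |l.re| ^ 2 * |l.re|) := by gcongr
    _ = ‖z‖ ^ 2 * ε ^ 2 / (2 * |l.re| ^ 3) := by ring

/-- For `Re λ < 0`, `Re μ > 0` with `|λ + conj μ| ≤ ε`, the minimum over `x ∈ ℂ` of
`‖z v[−conj λ] + x v[μ]‖²_{H₂}` equals `|z|²|μ + conj λ|²/(2|μ − λ|² Re(−λ))`,
which is at most `|z|² ε²/(2|Re λ|³)`. -/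
theorem stmt_11 (l μ z : ℂ) (ε : ℝ) (hl : l.re < 0) (hμ : 0 < μ.re)
    (hε : ‖l + (starRingEnd ℂ) μ‖ ≤ ε) :
    IsLeast {r : ℝ | ∃ x : ℂ, r = (1 / (2 * Real.pi)) *
        ∫ ω : ℝ, ‖z * (I * ω - l)⁻¹ + x * (I * ω + (starRingEnd ℂ) μ)⁻¹‖ ^ 2}
      (‖z‖ ^ 2 * ‖μ + (starRingEnd ℂ) l‖ ^ 2 / (2 * ‖μ - l‖ ^ 2 * (-l).re)) ∧
    ‖z‖ ^ 2 * ‖μ + (starRingEnd ℂ) l‖ ^ 2 / (2 * ‖μ - l‖ ^ 2 * (-l).re)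
      ≤ ‖z‖ ^ 2 * ε ^ 2 / (2 * |l.re| ^ 3) := by
  have hp : 0 < (-l).re := by simpa using hl
  have hq : 0 < (conj μ).re := by simpa using hμ
  refine ⟨?_, norm_sq_mul_norm_add_conj_sq_div_le hl hμ.le hε z⟩
  convert isLeast_range_add_re_add_mul_norm_sq (‖z‖ ^ 2 / (2 * (-l).re)) (2 * μ.re)⁻¹
    (z / (μ - l)) (by positivity) using 1
  · ext r
    simp only [Set.mem_ofPred_eq, Set.mem_range, sub_eq_add_neg _ l, integral_norm_sq_add hp hq,
      conj_conj, neg_add_eq_sub, conj_re]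
    refine exists_congr fun x => ?_
    rw [eq_comm]
    field_simp
  · have hml : 0 < ‖μ - l‖ := (show 0 < (μ - l).re by simp; linarith).trans_le (re_le_norm _)
    have := hl.ne
    rw [norm_div, div_pow, norm_add_conj_sq, neg_re]
    field_simp
    ring
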